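/- For n = 3 and each integer m ≥ 1, as ρ → 0⁺: (2S_{2m+3}(ρ) + 3S_{2m+2}(ρ) + 2S_{2m+1}(ρ)·1) divided by (S_{2m+1}(ρ) + S_{2m}(ρ)) — i.e., the momentum variance var_M — equals (2m+3)(2m+4)/(4ρ²) + 2m(2m+3)/((2m+2)ρ) + O(1), where S_k(ρ) = ∑_{l=0}^∞ (l+1) l^k e^{-2ρl}. -/

import Mathlib

/-!
Put `x = e^{-2ρ}` and `y = 1 - x`. Expanding `l ^ k` in the basis `(l + j).choose j` and using
`∑ₗ (l + j).choose j * x ^ l = y^{-(j+1)}` shows that `y ^ (k + 2) * S_k` is a polynomial in `y`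
with constant term `(k + 1)!` and linear coefficient `k! - (k + 2)! / 2`. The variance is therefore
`Q(y) / (R(y) y²)` for explicit polynomials `Q`, `R`, and since `Q - (A + B X) R` is divisible by
`X²` for suitable `A`, `B`, it equals `A / y² + B / y + O(1)`. Finally the third-order Taylor
expansion of `exp` gives `1 / y = 1 / (2ρ) + 1 / 2 + O(ρ)`, which turns this into the expansion in `ρ`.
-/

open Finset Nat Polynomial Filter Topology Asymptotics Real

/-- `powChooseCoeff r j` is the coefficient of `(l + j).choose j` in `l ^ r`; the recursion comes
from `l * (l + j).choose j = (j + 1) * (l + j + 1).choose (j + 1) - (j + 1) * (l + j).choose j`. -/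
noncomputable def powChooseCoeff : ℕ → ℕ → ℝ
  | 0, 0 => 1
  | 0, _ + 1 => 0
  | r + 1, 0 => -powChooseCoeff r 0
  | r + 1, j + 1 => (j + 1) * powChooseCoeff r j - (j + 2) * powChooseCoeff r (j + 1)

theorem powChooseCoeff_eq_zero_of_lt {r j : ℕ} (h : r < j) : powChooseCoeff r j = 0 := by
  induction r generalizing j with
  | zero => obtain ⟨j, rfl⟩ := Nat.exists_eq_add_one_of_ne_zero h.ne'; rfl
  | succ r ih =>
    obtain ⟨j, rfl⟩ := Nat.exists_eq_add_one_of_ne_zero (Nat.zero_lt_of_lt h).ne'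
    simp [powChooseCoeff, ih (by omega : r < j), ih (by omega : r < j + 1)]

theorem powChooseCoeff_self (r : ℕ) : powChooseCoeff r r = r ! := by
  induction r with
  | zero => simp [powChooseCoeff]
  | succ r ih =>
    simp [powChooseCoeff, ih, powChooseCoeff_eq_zero_of_lt (lt_add_one r), Nat.factorial_succ]

theorem powChooseCoeff_succ_self (r : ℕ) : powChooseCoeff (r + 1) r = -(r + 2)! / 2 := by
  induction r with
  | zero => norm_num [powChooseCoeff]
  | succ r ih =>
    simp only [powChooseCoeff, ih, powChooseCoeff_self, powChooseCoeff_eq_zero_of_lt (lt_add_one r),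
      Nat.factorial_succ]
    push_cast; ring

theorem cast_pow_eq_sum_powChooseCoeff_mul_choose (r l : ℕ) :
    (l : ℝ) ^ r = ∑ j ∈ range (r + 1), powChooseCoeff r j * (l + j).choose j := by
  induction r with
  | zero => simp [powChooseCoeff]
  | succ r ih =>
    set b : ℕ → ℝ := fun j => ((l + j).choose j : ℕ)
    have hb (j : ℕ) : (l : ℝ) * b j = (j + 1) * b (j + 1) - (j + 1) * b j := by
      have := congrArg (Nat.cast (R := ℝ)) (Nat.add_one_mul_choose_eq (l + j) j)
      simp only [b, ← add_assoc]
      push_cast at this ⊢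
      linear_combination this
    set g : ℕ → ℝ := fun j => (j + 1) * powChooseCoeff r j * b j
    have hg : ∑ j ∈ range (r + 1), g j = ∑ j ∈ range (r + 1), g (j + 1) + g 0 := by
      have hlast : g (r + 1) = 0 := by simp [g, powChooseCoeff_eq_zero_of_lt (lt_add_one r)]
      linear_combination sum_range_succ' g (r + 1) - sum_range_succ g (r + 1) - hlast
    calc (l : ℝ) ^ (r + 1)
        = ∑ j ∈ range (r + 1), powChooseCoeff r j * ((l : ℝ) * b j) := by
          rw [_root_.pow_succ', ih, mul_sum]; exact sum_congr rfl fun j _ => by ring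
      _ = ∑ j ∈ range (r + 1), (j + 1) * powChooseCoeff r j * b (j + 1) - ∑ j ∈ range (r + 1), g j := by
          rw [← sum_sub_distrib]; exact sum_congr rfl fun j _ => by rw [hb]; ring
      _ = ∑ j ∈ range (r + 1), ((j + 1) * powChooseCoeff r j - (j + 2) * powChooseCoeff r (j + 1))
            * b (j + 1) - powChooseCoeff r 0 := by
          rw [hg, ← sub_sub, ← sum_sub_distrib]
          congr 1
          · exact sum_congr rfl fun j _ => by simp only [g]; push_cast; ring
          · simp [g, b]
      _ = _ := by
          rw [sum_range_succ' _ (r + 1)]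
          simp [powChooseCoeff, b, sub_eq_add_neg]

theorem hasSum_pow_mul_geometric (r : ℕ) {x : ℝ} (hx : ‖x‖ < 1) :
    HasSum (fun l : ℕ => (l : ℝ) ^ r * x ^ l)
      (∑ j ∈ range (r + 1), powChooseCoeff r j / (1 - x) ^ (j + 1)) := by
  have hj (j : ℕ) : HasSum (fun l : ℕ => powChooseCoeff r j * ((l + j).choose j * x ^ l))
      (powChooseCoeff r j / (1 - x) ^ (j + 1)) := by
    rw [div_eq_mul_one_div]
    exact (hasSum_choose_mul_geometric_of_norm_lt_one j hx).mul_left _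
  convert hasSum_sum fun j _ => hj j using 1
  ext l
  rw [cast_pow_eq_sum_powChooseCoeff_mul_choose, sum_mul]
  exact sum_congr rfl fun j _ => by ring

noncomputable def momentPoly (k : ℕ) : ℝ[X] :=
  ∑ j ∈ range (k + 2), C (powChooseCoeff (k + 1) j + powChooseCoeff k j) * X ^ (k + 1 - j)

theorem momentPoly_coeff_zero (k : ℕ) : (momentPoly k).coeff 0 = (k + 1)! := by
  rw [momentPoly, finsetSum_coeff, sum_eq_single (k + 1)]
  · rw [coeff_C_mul_X_pow, if_pos (by omega), powChooseCoeff_self,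
      powChooseCoeff_eq_zero_of_lt (lt_add_one k), add_zero]
  · intro j hj hne
    rw [coeff_C_mul_X_pow, if_neg (by rw [mem_range] at hj; omega)]
  · simp

theorem momentPoly_coeff_one (k : ℕ) : (momentPoly k).coeff 1 = (k ! : ℝ) - (k + 2)! / 2 := by
  rw [momentPoly, finsetSum_coeff, sum_eq_single k]
  · rw [coeff_C_mul_X_pow, if_pos (by omega), powChooseCoeff_succ_self, powChooseCoeff_self]
    ring
  · intro j hj hne
    rw [coeff_C_mul_X_pow, if_neg (by rw [mem_range] at hj; omega)]
  · simp

theorem tsum_succ_mul_pow_mul_geometric (k : ℕ) {x : ℝ} (hx : ‖x‖ < 1) :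
    (∑' l : ℕ, ((l : ℝ) + 1) * (l : ℝ) ^ k * x ^ l) * (1 - x) ^ (k + 2)
      = (momentPoly k).eval (1 - x) := by
  have hy : 1 - x ≠ 0 := sub_ne_zero.2 (ne_of_gt (lt_of_abs_lt hx))
  have hsum := (hasSum_pow_mul_geometric (k + 1) hx).add (hasSum_pow_mul_geometric k hx)
  have hpad : ∑ j ∈ range (k + 1), powChooseCoeff k j / (1 - x) ^ (j + 1)
      = ∑ j ∈ range (k + 2), powChooseCoeff k j / (1 - x) ^ (j + 1) := by
    rw [sum_range_succ _ (k + 1), powChooseCoeff_eq_zero_of_lt (lt_add_one k), zero_div, add_zero]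
  rw [hpad, ← sum_add_distrib] at hsum
  rw [show (fun l : ℕ => ((l : ℝ) + 1) * (l : ℝ) ^ k * x ^ l)
      = fun l : ℕ => (l : ℝ) ^ (k + 1) * x ^ l + (l : ℝ) ^ k * x ^ l from funext fun l => by ring,
    hsum.tsum_eq, momentPoly, eval_finsetSum, sum_mul]
  refine sum_congr rfl fun j hj => ?_
  rw [mem_range] at hj
  rw [eval_mul, eval_C, eval_pow, eval_X, show k + 1 - j = k + 2 - (j + 1) by omega,
    pow_sub₀ _ hy (by omega : j + 1 ≤ k + 2)]
  ring

noncomputable def momentSum (k : ℕ) (ρ : ℝ) : ℝ :=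
  ∑' l : ℕ, ((l : ℝ) + 1) * (l : ℝ) ^ k * exp (-2 * ρ * l)

theorem momentSum_mul_pow_eq_eval (k : ℕ) {ρ : ℝ} (hρ : 0 < ρ) :
    momentSum k ρ * (1 - exp (-2 * ρ)) ^ (k + 2) = (momentPoly k).eval (1 - exp (-2 * ρ)) := by
  have hx : ‖exp (-2 * ρ)‖ < 1 := by
    rw [norm_of_nonneg (exp_pos _).le, exp_lt_one_iff]; linarith
  rw [← tsum_succ_mul_pow_mul_geometric k hx, momentSum]
  congr 2 with l
  rw [← exp_nat_mul]; ring_nf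

noncomputable def varianceNumPoly (k : ℕ) : ℝ[X] :=
  momentPoly (k + 3) + C 3 * X * momentPoly (k + 2) + C 2 * X ^ 2 * momentPoly (k + 1)

noncomputable def varianceDenPoly (k : ℕ) : ℝ[X] :=
  momentPoly (k + 1) + X * momentPoly k

theorem momentSum_ratio_eq (k : ℕ) {ρ : ℝ} (hρ : 0 < ρ) :
    (momentSum (k + 3) ρ + 3 * momentSum (k + 2) ρ + 2 * momentSum (k + 1) ρ) /
        (momentSum (k + 1) ρ + momentSum k ρ)
      = (varianceNumPoly k).eval (1 - exp (-2 * ρ)) /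
          ((varianceDenPoly k).eval (1 - exp (-2 * ρ)) * (1 - exp (-2 * ρ)) ^ 2) := by
  have hy : 1 - exp (-2 * ρ) ≠ 0 := by
    rw [sub_ne_zero, ne_comm, Ne, exp_eq_one_iff]; linarith
  have hS (j : ℕ) :
      momentSum j ρ = (momentPoly j).eval (1 - exp (-2 * ρ)) / (1 - exp (-2 * ρ)) ^ (j + 2) :=
    eq_div_of_mul_eq (pow_ne_zero _ hy) (momentSum_mul_pow_eq_eval j hρ)
  simp only [hS]
  generalize 1 - exp (-2 * ρ) = y at hy ⊢
  have hN : (momentPoly (k + 3)).eval y / y ^ (k + 3 + 2)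
        + 3 * ((momentPoly (k + 2)).eval y / y ^ (k + 2 + 2))
        + 2 * ((momentPoly (k + 1)).eval y / y ^ (k + 1 + 2))
      = (varianceNumPoly k).eval y / y ^ 2 / y ^ (k + 3) := by
    simp only [varianceNumPoly, eval_add, eval_mul, eval_C, eval_X, eval_pow]
    field_simp
    ring
  have hD : (momentPoly (k + 1)).eval y / y ^ (k + 1 + 2) + (momentPoly k).eval y / y ^ (k + 2)
      = (varianceDenPoly k).eval y / y ^ (k + 3) := by
    simp only [varianceDenPoly, eval_add, eval_mul, eval_X]
    field_simp
    ring
  rw [hN, hD, div_div_div_cancel_right₀ (pow_ne_zero _ hy), div_div, mul_comm (y ^ 2)]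

theorem varianceDenPoly_coeff_zero (k : ℕ) : (varianceDenPoly k).coeff 0 = (k + 2)! := by
  simp [varianceDenPoly, momentPoly_coeff_zero]

theorem varianceDenPoly_coeff_one (k : ℕ) :
    (varianceDenPoly k).coeff 1 = (k + 1)! - (k + 3)! / 2 + (k + 1)! := by
  simp [varianceDenPoly, momentPoly_coeff_zero, momentPoly_coeff_one]

theorem varianceNumPoly_coeff_zero (k : ℕ) : (varianceNumPoly k).coeff 0 = (k + 4)! := by
  simp [varianceNumPoly, mul_assoc, momentPoly_coeff_zero]

theorem varianceNumPoly_coeff_one (k : ℕ) :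
    (varianceNumPoly k).coeff 1 = (k + 3)! - (k + 5)! / 2 + 3 * (k + 3)! := by
  simp [varianceNumPoly, mul_assoc, coeff_X_pow_mul', momentPoly_coeff_zero, momentPoly_coeff_one]

theorem Polynomial.isBigO_eval_div_mul_sq_sub {𝕜 : Type*} [NontriviallyNormedField 𝕜]
    {Q R : 𝕜[X]} {A B : 𝕜} (hR : R.coeff 0 ≠ 0) (h₀ : Q.coeff 0 = A * R.coeff 0)
    (h₁ : Q.coeff 1 = A * R.coeff 1 + B * R.coeff 0) :
    (fun t => Q.eval t / (R.eval t * t ^ 2) - (A / t ^ 2 + B / t)) =O[𝓝[≠] 0] fun _ => (1 : 𝕜) := by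
  obtain ⟨T, hT⟩ : X ^ 2 ∣ Q - (C A + C B * X) * R := by
    refine X_pow_dvd_iff.2 fun d hd => ?_
    interval_cases d
    · simp only [coeff_sub, add_mul, coeff_add, coeff_C_mul, mul_assoc, coeff_X_mul_zero, h₀]
      ring
    · simp only [coeff_sub, add_mul, coeff_add, coeff_C_mul, mul_assoc, coeff_X_mul, h₁]
      ring
  have hR0 : R.eval 0 ≠ 0 := by rwa [← coeff_zero_eq_eval_zero]
  have hlim : Tendsto (fun t => T.eval t / R.eval t) (𝓝 0) (𝓝 (T.eval 0 / R.eval 0)) :=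
    (T.continuous.tendsto 0).div (R.continuous.tendsto 0) hR0
  refine ((hlim.isBigO_one 𝕜).mono nhdsWithin_le_nhds).congr' ?_ EventuallyEq.rfl
  filter_upwards [self_mem_nhdsWithin,
    nhdsWithin_le_nhds ((R.continuous.tendsto 0).eventually_ne hR0)] with t (ht : t ≠ 0) hRt
  have hTt := congrArg (eval t) hT
  simp only [eval_sub, eval_mul, eval_add, eval_C, eval_X, eval_pow] at hTt
  rw [div_eq_iff hRt]
  field_simp
  linear_combination -hTt

theorem isBigO_exp_neg_two_mul_sub :
    (fun ρ : ℝ => exp (-2 * ρ) - (1 - 2 * ρ + 2 * ρ ^ 2)) =O[𝓝 0] fun ρ => ρ ^ 3 := by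
  have h := (exp_sub_sum_range_isBigO_pow 3).comp_tendsto
    ((continuous_const_mul (-2 : ℝ)).tendsto' 0 0 (mul_zero _))
  have h8 : (fun ρ : ℝ => (-2 * ρ) ^ 3) =O[𝓝 0] fun ρ => ρ ^ 3 := by
    simpa only [mul_pow] using (isBigO_refl (fun ρ : ℝ => ρ ^ 3) _).const_mul_left ((-2) ^ 3)
  convert h.trans h8 using 2 with ρ
  simp only [Function.comp_apply, sum_range_succ, sum_range_zero, factorial]
  push_cast
  ring

theorem isBigO_self_one_sub_exp_neg_two_mul :
    (fun ρ : ℝ => ρ) =O[𝓝 0] fun ρ => 1 - exp (-2 * ρ) := by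
  have hsq : (fun ρ : ℝ => ρ ^ 2) =o[𝓝 0] fun ρ => ρ := by
    simpa using isLittleO_pow_pow (𝕜 := ℝ) one_lt_two
  have hrem : (fun ρ : ℝ => (1 - exp (-2 * ρ)) - 2 * ρ) =o[𝓝 0] fun ρ => 2 * ρ := by
    refine (((isBigO_refl (fun ρ : ℝ => ρ ^ 2) _).const_mul_left (-2)).sub
      (isBigO_exp_neg_two_mul_sub.trans (isLittleO_pow_pow (by norm_num)).isBigO)).congr_left
      (fun ρ => by ring) |>.trans_isLittleO ?_
    exact hsq.trans_isBigO (isBigO_self_const_mul two_ne_zero _ _)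
  exact (isBigO_self_const_mul two_ne_zero _ _).trans hrem.isEquivalent.isBigO_symm

theorem isBigO_inv_one_sub_exp_neg_two_mul_sub :
    (fun ρ : ℝ => (1 - exp (-2 * ρ))⁻¹ - (2 * ρ)⁻¹ - 2⁻¹) =O[𝓝[≠] 0] id := by
  set E : ℝ → ℝ := fun ρ => exp (-2 * ρ) - (1 - 2 * ρ + 2 * ρ ^ 2)
  have hnum : (fun ρ : ℝ => 2 * ρ ^ 3 + (1 + ρ) * E ρ) =O[𝓝 0] fun ρ => ρ ^ 3 :=
    (isBigO_const_mul_self 2 _ _).add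
      ((((continuous_const.add continuous_id).tendsto' 0 1 (by simp)).isBigO_one ℝ).mul
        isBigO_exp_neg_two_mul_sub |>.trans_eventuallyEq (.of_eq (by simp)))
  have hinv : (fun ρ : ℝ => (1 - exp (-2 * ρ))⁻¹) =O[𝓝 0] fun ρ => ρ⁻¹ :=
    isBigO_self_one_sub_exp_neg_two_mul.inv_rev (.of_forall fun ρ hρ => by simp [hρ])
  have hprod := ((hnum.mul (isBigO_const_mul_self 2⁻¹ (fun ρ : ℝ => ρ⁻¹) _)).mul hinv).mono
    (nhdsWithin_le_nhds (s := {0}ᶜ))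
  refine hprod.congr' ?_ ?_
  · filter_upwards [self_mem_nhdsWithin] with ρ (hρ : ρ ≠ 0)
    have hy : 1 - exp (-2 * ρ) ≠ 0 := by
      rw [sub_ne_zero, ne_comm, Ne, exp_eq_one_iff]; simpa using hρ
    simp only [E]
    generalize exp (-2 * ρ) = x at hy ⊢
    field_simp
    ring
  · filter_upwards [self_mem_nhdsWithin] with ρ (hρ : ρ ≠ 0)
    field_simp
    simp

theorem tendsto_one_sub_exp_neg_two_mul_nhdsGT :
    Tendsto (fun ρ : ℝ => 1 - exp (-2 * ρ)) (𝓝[>] 0) (𝓝[≠] 0) := by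
  refine tendsto_nhdsWithin_iff.2 ⟨?_, eventually_mem_nhdsWithin.mono fun ρ (hρ : 0 < ρ) => ?_⟩
  · exact ((continuous_const.sub (continuous_exp.comp (continuous_const_mul _))).tendsto' 0 0
      (by simp)).mono_left nhdsWithin_le_nhds
  · simp only [Set.mem_compl_iff, Set.mem_singleton_iff, sub_eq_zero, eq_comm (a := (1 : ℝ)),
      exp_eq_one_iff]
    linarith

theorem isBigO_div_one_sub_exp_neg_two_mul_sub (A γ : ℝ) :
    (fun ρ : ℝ => A / (1 - exp (-2 * ρ)) ^ 2 + (2 * γ - A) / (1 - exp (-2 * ρ))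
      - (A / (4 * ρ ^ 2) + γ / ρ)) =O[𝓝[≠] 0] fun _ => (1 : ℝ) := by
  set e : ℝ → ℝ := fun ρ => (1 - exp (-2 * ρ))⁻¹ - (2 * ρ)⁻¹ - 2⁻¹
  have he : e =O[𝓝[≠] 0] id := isBigO_inv_one_sub_exp_neg_two_mul_sub
  have hid : (id : ℝ → ℝ) =O[𝓝[≠] 0] fun _ => (1 : ℝ) :=
    (tendsto_id.mono_left nhdsWithin_le_nhds).isBigO_one ℝ
  have he₁ : e =O[𝓝[≠] 0] fun _ => (1 : ℝ) := he.trans hid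
  have he_div : (fun ρ => e ρ * ρ⁻¹) =O[𝓝[≠] 0] fun _ => (1 : ℝ) :=
    (he.mul (isBigO_refl (fun ρ : ℝ => ρ⁻¹) _)).trans_eventuallyEq
      (eventually_mem_nhdsWithin.mono fun ρ (hρ : ρ ≠ 0) => mul_inv_cancel₀ hρ)
  -- with `1 / y = 1 / (2ρ) + 1 / 2 + e`, the singular terms cancel exactly
  have hexpand : ∀ ρ : ℝ, A / (1 - exp (-2 * ρ)) ^ 2 + (2 * γ - A) / (1 - exp (-2 * ρ))
      - (A / (4 * ρ ^ 2) + γ / ρ)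
      = A * (4⁻¹ + e ρ * e ρ + e ρ * ρ⁻¹ + e ρ) + (2 * γ - A) * (2⁻¹ + e ρ) := by
    intro ρ; simp only [e, div_eq_mul_inv, mul_inv, ← inv_pow]; ring
  simp only [hexpand]
  have he₂ : (fun ρ => e ρ * e ρ) =O[𝓝[≠] 0] fun _ => (1 : ℝ) := by simpa using he₁.mul he₁
  exact ((((isBigO_const_one ℝ _ _).add he₂).add he_div).add he₁ |>.const_mul_left A).add
    ((isBigO_const_one ℝ _ _).add he₁ |>.const_mul_left _)

theorem isBigO_momentSum_ratio_sub (k : ℕ) :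
    (fun ρ : ℝ => (momentSum (k + 3) ρ + 3 * momentSum (k + 2) ρ + 2 * momentSum (k + 1) ρ) /
        (momentSum (k + 1) ρ + momentSum k ρ) -
      (((k : ℝ) + 3) * ((k : ℝ) + 4) / (4 * ρ ^ 2) + (k : ℝ) * ((k : ℝ) + 3) / (((k : ℝ) + 2) * ρ)))
      =O[𝓝[>] 0] fun _ => (1 : ℝ) := by
  set A : ℝ := ((k : ℝ) + 3) * ((k : ℝ) + 4)
  set γ : ℝ := (k : ℝ) * ((k : ℝ) + 3) / ((k : ℝ) + 2)
  have hR : (varianceDenPoly k).coeff 0 ≠ 0 := by rw [varianceDenPoly_coeff_zero]; positivity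
  have h₀ : (varianceNumPoly k).coeff 0 = A * (varianceDenPoly k).coeff 0 := by
    rw [varianceNumPoly_coeff_zero, varianceDenPoly_coeff_zero]
    push_cast [Nat.factorial_succ]
    ring
  have h₁ : (varianceNumPoly k).coeff 1
      = A * (varianceDenPoly k).coeff 1 + (2 * γ - A) * (varianceDenPoly k).coeff 0 := by
    rw [varianceNumPoly_coeff_one, varianceDenPoly_coeff_one, varianceDenPoly_coeff_zero]
    push_cast [A, γ, Nat.factorial_succ]
    field_simp
    ring
  have hratio := (isBigO_eval_div_mul_sq_sub hR h₀ h₁).comp_tendsto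
    tendsto_one_sub_exp_neg_two_mul_nhdsGT
  have hconv := (isBigO_div_one_sub_exp_neg_two_mul_sub A γ).mono
    (nhdsWithin_mono _ fun ρ (hρ : 0 < ρ) => hρ.ne')
  refine (hratio.add hconv).congr' ?_ EventuallyEq.rfl
  filter_upwards [self_mem_nhdsWithin] with ρ (hρ : 0 < ρ)
  rw [Function.comp_apply, momentSum_ratio_eq k hρ, div_mul_eq_div_div _ _ ρ]
  ring

open Asymptotics in
theorem stmt_19_general (m : ℕ) (S : ℕ → ℝ → ℝ)
    (hS : ∀ k : ℕ, ∀ ρ : ℝ, S k ρ = ∑' l : ℕ, ((l : ℝ) + 1) * (l : ℝ) ^ k * Real.exp (-2 * ρ * l)) :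
    (fun ρ : ℝ =>
        (S (2 * m + 3) ρ + 3 * S (2 * m + 2) ρ + 2 * S (2 * m + 1) ρ) /
            (S (2 * m + 1) ρ + S (2 * m) ρ) -
          ((2 * (m : ℝ) + 3) * (2 * (m : ℝ) + 4) / (4 * ρ ^ 2) +
            2 * (m : ℝ) * (2 * (m : ℝ) + 3) / ((2 * (m : ℝ) + 2) * ρ)))
      =O[nhdsWithin 0 (Set.Ioi 0)] (fun _ : ℝ => (1 : ℝ)) := by
  obtain rfl : S = momentSum := funext fun k => funext (hS k)
  simpa using isBigO_momentSum_ratio_sub (2 * m)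

open Asymptotics in
theorem stmt_19 (m : ℕ) (hm : 1 ≤ m) (S : ℕ → ℝ → ℝ)
    (hS : ∀ k : ℕ, ∀ ρ : ℝ, S k ρ = ∑' l : ℕ, ((l : ℝ) + 1) * (l : ℝ) ^ k * Real.exp (-2 * ρ * l)) :
    (fun ρ : ℝ =>
        (S (2 * m + 3) ρ + 3 * S (2 * m + 2) ρ + 2 * S (2 * m + 1) ρ) /
            (S (2 * m + 1) ρ + S (2 * m) ρ) -
          ((2 * (m : ℝ) + 3) * (2 * (m : ℝ) + 4) / (4 * ρ ^ 2) +
            2 * (m : ℝ) * (2 * (m : ℝ) + 3) / ((2 * (m : ℝ) + 2) * ρ)))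
      =O[nhdsWithin 0 (Set.Ioi 0)] (fun _ : ℝ => (1 : ℝ)) :=
  stmt_19_general m S hS
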